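/- arXiv:0804.1748 — 3 statements merged into one kernel-verified Lean document; each statement's English description precedes it below -/
import Mathlib

section
/- Fix P > 0 and define, for B > 0, the penalty D(B) = (B/β)·∫∫ log(1 + (βP/B)·C(ν,τ)) dτ dν, where β ≥ 1 and C is nonnegative integrable with ∫∫ C = 1 and ∫∫ C² = σ < ∞. Then D(B) admits the asymptotic expansion D(B) = P − (βP²σ)/(2B) + o(1/B) as B → ∞. -/
/-!
Write `log (1 + x) = x - x ^ 2 / 2 + R x`. With `ε = β P / B`, the mass condition turns
`(B / β) ∫∫ (ε C - ε ^ 2 C ^ 2 / 2)` into `P - β P ^ 2 σ / (2 B)`,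
so `B r(B) = β P ^ 2 ∫∫ R (ε C) / ε ^ 2`.
Since `|R x| ≤ x ^ 2 / 2` for `x ≥ 0`, the integrand is dominated by `C ^ 2 / 2`, and
`R x = O(x ^ 3)` makes it tend to `0` pointwise; dominated convergence finishes.
-/

open MeasureTheory Filter Topology Asymptotics

namespace Real

noncomputable def logOneAddRem (x : ℝ) : ℝ := log (1 + x) - x + x ^ 2 / 2

lemma abs_logOneAddRem_le_sq {x : ℝ} (hx : 0 ≤ x) : |logOneAddRem x| ≤ x ^ 2 / 2 := by
  have hupper : log (1 + x) ≤ x := by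
    linarith [log_le_sub_one_of_pos (by linarith : 0 < 1 + x)]
  have hlower : 2 * x / (x + 2) ≤ log (1 + x) := le_log_one_add_of_nonneg hx
  have hgap : x ^ 2 / (x + 2) ≤ x ^ 2 := div_le_self (sq_nonneg x) (by linarith)
  have hsplit : 2 * x / (x + 2) - x = -(x ^ 2 / (x + 2)) := by field_simp; ring
  rw [logOneAddRem, abs_le]
  constructor <;> nlinarith

lemma abs_logOneAddRem_le_cube {x : ℝ} (hx : |x| < 1) :
    |logOneAddRem x| ≤ |x| ^ 3 / (1 - |x|) := by
  have h := abs_log_sub_add_sum_range_le (x := -x) (by rwa [abs_neg]) 2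
  simp only [Finset.sum_range_succ, Finset.sum_range_zero, abs_neg, sub_neg_eq_add] at h
  convert h using 2
  rw [logOneAddRem]
  push_cast
  ring

lemma logOneAddRem_isLittleO : logOneAddRem =o[𝓝 0] fun x => x ^ 2 := by
  have hcube : logOneAddRem =O[𝓝 0] fun x => x ^ 3 := by
    refine IsBigO.of_bound 2 ?_
    filter_upwards [eventually_abs_sub_lt 0 (by norm_num : (0 : ℝ) < 1 / 2)] with x hx
    rw [sub_zero] at hx
    calc ‖logOneAddRem x‖ ≤ |x| ^ 3 / (1 - |x|) := abs_logOneAddRem_le_cube (by linarith)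
      _ ≤ |x| ^ 3 / (1 / 2) := by gcongr; linarith
      _ = 2 * ‖x ^ 3‖ := by rw [norm_pow, Real.norm_eq_abs]; ring
  exact hcube.trans_isLittleO (isLittleO_pow_pow (by norm_num))

lemma tendsto_logOneAddRem_mul_div_sq (c : ℝ) :
    Tendsto (fun ε => logOneAddRem (ε * c) / ε ^ 2) (𝓝 0) (𝓝 0) := by
  have hratio : Tendsto (fun x => logOneAddRem x / x ^ 2) (𝓝 0) (𝓝 0) :=
    logOneAddRem_isLittleO.tendsto_div_nhds_zero
  have hscale : Tendsto (fun ε : ℝ => ε * c) (𝓝 0) (𝓝 0) := by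
    simpa using (continuous_mul_const c).tendsto 0
  have hid : ∀ ε, logOneAddRem (ε * c) / ε ^ 2 =
      c ^ 2 * (logOneAddRem (ε * c) / (ε * c) ^ 2) := by
    intro ε
    rcases eq_or_ne ε 0 with rfl | hε
    · simp
    rcases eq_or_ne c 0 with rfl | hc
    · simp [logOneAddRem]
    field_simp
  simpa [hid] using (hratio.comp hscale).const_mul (c ^ 2)


lemma abs_logOneAddRem_mul_le {ε c : ℝ} (hε : 0 ≤ ε) (hc : 0 ≤ c) :
    |logOneAddRem (ε * c)| ≤ ε ^ 2 * (c ^ 2 / 2) :=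
  (abs_logOneAddRem_le_sq (mul_nonneg hε hc)).trans_eq (by ring)

@[fun_prop]
lemma measurable_logOneAddRem : Measurable logOneAddRem := by
  unfold logOneAddRem; fun_prop

end Real

open Real

section Integral

variable {α : Type*} [MeasurableSpace α] {μ : Measure α} {C : α → ℝ}

lemma integrable_logOneAddRem_mul (hC0 : 0 ≤ᵐ[μ] C) (hC : AEStronglyMeasurable C μ)
    (hC2 : Integrable (fun a => C a ^ 2) μ) {ε : ℝ} (hε : 0 ≤ ε) :
    Integrable (fun a => logOneAddRem (ε * C a)) μ := by
  refine (hC2.div_const 2).const_mul (ε ^ 2) |>.mono' ?_ ?_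
  · exact (measurable_logOneAddRem.comp_aemeasurable
      (hC.aemeasurable.const_mul ε)).aestronglyMeasurable
  · filter_upwards [hC0] with a ha
    exact abs_logOneAddRem_mul_le hε ha

lemma integral_log_one_add_mul (hC0 : 0 ≤ᵐ[μ] C) (hC : Integrable C μ)
    (hC2 : Integrable (fun a => C a ^ 2) μ) {ε : ℝ} (hε : 0 ≤ ε) :
    ∫ a, log (1 + ε * C a) ∂μ = ε * ∫ a, C a ∂μ - ε ^ 2 / 2 * ∫ a, C a ^ 2 ∂μ +
      ∫ a, logOneAddRem (ε * C a) ∂μ := by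
  have hexpand : (fun a => log (1 + ε * C a)) =
      fun a => ε * C a - ε ^ 2 / 2 * C a ^ 2 + logOneAddRem (ε * C a) := by
    ext a; rw [logOneAddRem]; ring
  have hpoly : Integrable (fun a => ε * C a - ε ^ 2 / 2 * C a ^ 2) μ :=
    (hC.const_mul ε).sub (hC2.const_mul _)
  rw [hexpand, integral_add hpoly (integrable_logOneAddRem_mul hC0 hC.aestronglyMeasurable hC2 hε),
    integral_sub (hC.const_mul ε) (hC2.const_mul _), integral_const_mul, integral_const_mul]

lemma tendsto_integral_logOneAddRem_mul_div_sq (hC0 : 0 ≤ᵐ[μ] C)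
    (hC : AEStronglyMeasurable C μ) (hC2 : Integrable (fun a => C a ^ 2) μ) :
    Tendsto (fun ε => (∫ a, logOneAddRem (ε * C a) ∂μ) / ε ^ 2) (𝓝[>] 0) (𝓝 0) := by
  simp_rw [← integral_div]
  have hlim := tendsto_integral_filter_of_dominated_convergence (μ := μ) (l := 𝓝[>] (0 : ℝ))
    (F := fun ε a => logOneAddRem (ε * C a) / ε ^ 2) (f := fun _ => 0) (fun a => C a ^ 2 / 2)
    (Eventually.of_forall fun ε =>
      ((measurable_logOneAddRem.comp_aemeasurable (hC.aemeasurable.const_mul ε)).div_const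
        _).aestronglyMeasurable)
    ?_ (hC2.div_const 2)
    (ae_of_all _ fun a => (tendsto_logOneAddRem_mul_div_sq (C a)).mono_left nhdsWithin_le_nhds)
  · simpa using hlim
  · filter_upwards [self_mem_nhdsWithin] with ε (hε : 0 < ε)
    filter_upwards [hC0] with a ha
    rw [norm_div, norm_pow, Real.norm_eq_abs, Real.norm_eq_abs, abs_of_pos hε,
      div_le_iff₀ (by positivity)]
    linarith [abs_logOneAddRem_mul_le hε.le ha]

end Integral

/-- Asymptotic expansion of the penalty term: for `P > 0`, `β ≥ 1`, and a
nonnegative integrable `C` with `∫∫ C = 1` and `∫∫ C² = σ < ∞`, the function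
`D(B) = (B/β) ∫∫ log(1 + (βP/B) C)` satisfies
`D(B) = P - βP²σ/(2B) + o(1/B)` as `B → ∞`. -/
theorem stmt_9 (P β σ : ℝ) (C : ℝ × ℝ → ℝ) (hP : 0 < P) (hβ : 1 ≤ β)
    (hC0 : ∀ p, 0 ≤ C p)
    (hCint : Integrable C)
    (hmass : ∫ p : ℝ × ℝ, C p = 1)
    (hC2int : Integrable (fun p => C p ^ 2))
    (hσ : σ = ∫ p : ℝ × ℝ, C p ^ 2)
    (D : ℝ → ℝ)
    (hD : ∀ B : ℝ, 0 < B →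
      D B = (B / β) * ∫ p : ℝ × ℝ, Real.log (1 + (β * P / B) * C p)) :
    ∃ r : ℝ → ℝ,
      (∀ B : ℝ, 0 < B → D B = P - β * P ^ 2 * σ / (2 * B) + r B) ∧
      Tendsto (fun B => B * r B) atTop (nhds 0) := by
  have hβP : 0 < β * P := mul_pos (by linarith) hP
  set ε : ℝ → ℝ := fun B => β * P / B
  have hε : Tendsto ε atTop (𝓝[>] 0) :=
    tendsto_nhdsWithin_iff.2 ⟨tendsto_const_nhds.div_atTop tendsto_id,
      eventually_gt_atTop 0 |>.mono fun B hB => div_pos hβP hB⟩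
  have hrem := ((tendsto_integral_logOneAddRem_mul_div_sq (ae_of_all _ hC0)
    hCint.aestronglyMeasurable hC2int).comp hε).const_mul (β * P ^ 2)
  refine ⟨fun B => D B - (P - β * P ^ 2 * σ / (2 * B)), fun B _ => by ring, ?_⟩
  rw [mul_zero] at hrem
  refine hrem.congr' (eventually_gt_atTop 0 |>.mono fun B hB => ?_)
  have hεB : 0 < ε B := div_pos hβP hB
  simp only [Function.comp_apply, hD B hB,
    integral_log_one_add_mul (ae_of_all _ hC0) hCint hC2int hεB.le, hmass, ← hσ, ε]
  field_simp
  ring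
end

section
/- Let (Vₙ) be a sequence of random variables defined by Vₙ = (Sₙ/n)·log(Sₙ/n), where Sₙ = Σ_{i=0}^{n−1} rᵢ and (rᵢ) are i.i.d. nonnegative random variables with E[r₀] = 1 and E[r₀ log r₀] < ∞. Then Vₙ → 0 almost surely and in L¹ as n → ∞. -/
/-!
By Jensen's inequality for the convex function `x log x`, together with `x log x ≥ x - 1 ≥ -1`,
`|Vₙ|` is bounded by the empirical mean of the identically distributed integrable variables
`(rᵢ log rᵢ)⁺`, plus `1`. Empirical means of an identically distributed integrable sequence are
uniformly integrable, hence so is `(Vₙ)`. The strong law of large numbers gives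
`Vₙ → 1 · log 1 = 0` almost surely, and Vitali's convergence theorem upgrades this to `L¹`.
-/

open MeasureTheory Filter ProbabilityTheory Topology Finset Real

lemma Real.mul_log_average_le_average_mul_log {ι : Type*} (s : Finset ι) {x : ι → ℝ}
    (hx : ∀ i ∈ s, 0 ≤ x i) :
    (∑ i ∈ s, x i) / #s * log ((∑ i ∈ s, x i) / #s) ≤ (∑ i ∈ s, x i * log (x i)) / #s := by
  rcases s.eq_empty_or_nonempty with rfl | hs
  · simp
  have hcard : (0 : ℝ) < #s := by exact_mod_cast hs.card_pos
  have hjensen := convexOn_mul_log.map_sum_le (t := s) (w := fun _ => (#s : ℝ)⁻¹)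
    (fun _ _ => by positivity) (by simp [hcard.ne']) hx
  simpa only [smul_eq_mul, inv_mul_eq_div, ← Finset.sum_div] using hjensen

lemma Real.abs_mul_log_le_max_add_one {x : ℝ} (hx : 0 ≤ x) :
    |x * log x| ≤ max (x * log x) 0 + 1 := by
  have := self_sub_one_le_mul_log hx
  rw [abs_le]
  constructor <;> linarith [le_max_left (x * log x) 0, le_max_right (x * log x) 0]

lemma Real.abs_mul_log_average_le {ι : Type*} (s : Finset ι) {x : ι → ℝ}
    (hx : ∀ i ∈ s, 0 ≤ x i) :
    |(∑ i ∈ s, x i) / #s * log ((∑ i ∈ s, x i) / #s)| ≤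
      (∑ i ∈ s, max (x i * log (x i)) 0) / #s + 1 := by
  have havg : 0 ≤ (∑ i ∈ s, x i) / #s := div_nonneg (sum_nonneg hx) (Nat.cast_nonneg _)
  refine (abs_mul_log_le_max_add_one havg).trans (add_le_add_left (max_le ?_ ?_) _)
  · exact (mul_log_average_le_average_mul_log s hx).trans <| div_le_div_of_nonneg_right
      (sum_le_sum fun i _ => le_max_left _ _) (Nat.cast_nonneg _)
  · exact div_nonneg (sum_nonneg fun i _ => le_max_right _ _) (Nat.cast_nonneg _)

namespace MeasureTheory

theorem UnifIntegrable.of_ae_norm_le {α ι β γ : Type*} {m : MeasurableSpace α} {μ : Measure α}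
    [NormedAddCommGroup β] [NormedAddCommGroup γ] {p : ENNReal} {f : ι → α → β} {g : ι → α → γ}
    (hg : UnifIntegrable g p μ) (hfg : ∀ i, ∀ᵐ x ∂μ, ‖f i x‖ ≤ ‖g i x‖) :
    UnifIntegrable f p μ := by
  intro ε hε
  obtain ⟨δ, hδ, hgδ⟩ := hg hε
  refine ⟨δ, hδ, fun i s hs hμs => (eLpNorm_mono_ae ?_).trans (hgδ i s hs hμs)⟩
  filter_upwards [hfg i] with x hx
  by_cases hxs : x ∈ s <;> simp [hxs, hx]

theorem tendsto_integral_norm_of_unifIntegrable {α β : Type*} {m : MeasurableSpace α}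
    {μ : Measure α} [IsFiniteMeasure μ] [NormedAddCommGroup β] {f : ℕ → α → β}
    (hf : ∀ n, AEStronglyMeasurable (f n) μ) (hui : UnifIntegrable f 1 μ)
    (hlim : ∀ᵐ x ∂μ, Tendsto (fun n => f n x) atTop (𝓝 0)) :
    Tendsto (fun n => ∫ x, ‖f n x‖ ∂μ) atTop (𝓝 0) := by
  have hLp := tendsto_Lp_finite_of_tendsto_ae le_rfl ENNReal.one_ne_top hf
    (MemLp.zero' (p := 1) (μ := μ)) hui hlim
  have := (ENNReal.tendsto_toReal ENNReal.zero_ne_top).comp hLp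
  simp only [ENNReal.toReal_zero] at this
  refine this.congr fun n => ?_
  simp [integral_norm_eq_lintegral_enorm (hf n), eLpNorm_one_eq_lintegral_enorm]

end MeasureTheory

section MulLogAverage

variable {Ω : Type*} [MeasurableSpace Ω] {μ : Measure Ω} {r : ℕ → Ω → ℝ}

theorem ae_tendsto_mul_log_average (hint : Integrable (r 0) μ)
    (hindep : Pairwise fun i j => r i ⟂ᵢ[μ] r j) (hident : ∀ i, IdentDistrib (r i) (r 0) μ μ) :
    ∀ᵐ ω ∂μ, Tendsto (fun n : ℕ => (∑ i ∈ range n, r i ω) / n * log ((∑ i ∈ range n, r i ω) / n))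
      atTop (𝓝 (μ[r 0] * log μ[r 0])) := by
  filter_upwards [strong_law_ae_real r hint hindep hident] with ω hω
  exact (continuous_mul_log.tendsto _).comp hω

theorem unifIntegrable_mul_log_average [IsFiniteMeasure μ]
    (hident : ∀ i, IdentDistrib (r i) (r 0) μ μ) (hnonneg : ∀ i ω, 0 ≤ r i ω)
    (hint : Integrable (fun ω => max (r 0 ω * log (r 0 ω)) 0) μ) :
    UnifIntegrable (fun (n : ℕ) ω =>
      (∑ i ∈ range n, r i ω) / n * log ((∑ i ∈ range n, r i ω) / n)) 1 μ := by
  set X : ℕ → Ω → ℝ := fun i ω => max (r i ω * log (r i ω)) 0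
  have hX_ident : ∀ i, IdentDistrib (X i) (X 0) μ μ := fun i =>
    (hident i).comp (continuous_mul_log.max continuous_const).measurable
  have hW_ui := uniformIntegrable_average le_rfl <| MemLp.uniformIntegrable_of_identDistrib
    le_rfl ENNReal.one_ne_top (memLp_one_iff_integrable.2 hint) hX_ident
  refine (hW_ui.unifIntegrable.add (unifIntegrable_const le_rfl ENNReal.one_ne_top
    (memLp_const 1)) le_rfl hW_ui.1 fun _ => aestronglyMeasurable_const).of_ae_norm_le
    fun n => ae_of_all _ fun ω => ?_
  simpa [X, div_eq_inv_mul, Finset.mul_sum] using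
    (abs_mul_log_average_le (range n) fun i _ => hnonneg i ω).trans (le_abs_self _)

end MulLogAverage

/-- Let `(rᵢ)` be i.i.d. nonnegative random variables with mean `1` and
`E[|r₀ log r₀|] < ∞`, `Sₙ = Σ_{i<n} rᵢ`, and `Vₙ = (Sₙ/n) log(Sₙ/n)`. Then
`Vₙ → 0` almost surely and in `L¹`. -/
theorem stmt_17 {Ω : Type*} [MeasurableSpace Ω] (μ : Measure Ω)
    [IsProbabilityMeasure μ] (r : ℕ → Ω → ℝ)
    (hmeas : ∀ i, Measurable (r i))
    (hindep : iIndepFun r μ)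
    (hident : ∀ i, IdentDistrib (r i) (r 0) μ μ)
    (hnonneg : ∀ i ω, 0 ≤ r i ω)
    (hint : Integrable (r 0) μ)
    (hmean : ∫ ω, r 0 ω ∂μ = 1)
    (hloglint : Integrable (fun ω => |r 0 ω * Real.log (r 0 ω)|) μ)
    (V : ℕ → Ω → ℝ)
    (hV : ∀ n ω, V n ω =
      ((∑ i ∈ Finset.range n, r i ω) / (n : ℝ)) *
        Real.log ((∑ i ∈ Finset.range n, r i ω) / (n : ℝ))) :
    (∀ᵐ ω ∂μ, Tendsto (fun n => V n ω) atTop (nhds 0)) ∧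
    Tendsto (fun n => ∫ ω, |V n ω| ∂μ) atTop (nhds 0) := by
  obtain rfl : V = _ := funext fun n => funext (hV n)
  have hV_ae := ae_tendsto_mul_log_average hint (fun i j hij => hindep.indepFun hij) hident
  simp only [hmean, log_one, mul_zero] at hV_ae
  refine ⟨hV_ae, ?_⟩
  have hpos_int : Integrable (fun ω => max (r 0 ω * log (r 0 ω)) 0) μ :=
    hloglint.mono' (by fun_prop) <| ae_of_all _ fun ω => by
      rw [Real.norm_eq_abs, abs_of_nonneg (le_max_right _ _)]
      exact max_le (le_abs_self _) (abs_nonneg _)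
  simpa only [Real.norm_eq_abs] using
    tendsto_integral_norm_of_unifIntegrable (fun n => by fun_prop)
      (unifIntegrable_mul_log_average hident hnonneg hpos_int) hV_ae
end

section
/- For real numbers σ > 0, β ≥ 1, T F-product c > 0, suppose the 'spread' Δ > 0 and signal-to-noise ratio ρ = P/B ≥ 0 satisfy: either (ρ ≤ 1/c and Δ ≤ β/(3c)) or (1/c < ρ < (Δ/β)·(e^{β/(2cΔ)} − 1)). Then (Δ/β)·log(1 + βρ/Δ) ≤ (1/ρ + c)^{−1}. -/
/-!
Write `a = β/Δ`, so that the claim reads `log (1 + aρ) / a ≤ ρ / (1 + cρ)`.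
For small SNR (`cρ ≤ 1`) the bound `log (1 + x) ≤ x / √(1 + x)` reduces it to
`(1 + cρ)² ≤ 1 + aρ`, which holds once `3c ≤ a`. For large SNR (`cρ > 1`) the
right-hand side is at least `1/(2c)`, while the exponential condition says exactly
that the left-hand side is below `1/(2c)`.
-/

open Real

namespace Real

lemma two_mul_log_le_sub_inv {v : ℝ} (hv : 1 ≤ v) : 2 * log v ≤ v - v⁻¹ := by
  let g : ℝ → ℝ := fun t ↦ t - t⁻¹ - 2 * log t
  have hg : ∀ t ∈ Set.Ici (1 : ℝ), HasDerivAt g ((1 - t⁻¹) ^ 2) t := by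
    intro t (ht : 1 ≤ t)
    have ht0 : t ≠ 0 := by positivity
    refine (((hasDerivAt_id' t).sub (hasDerivAt_inv ht0)).sub
      ((hasDerivAt_log ht0).const_mul 2)).congr_deriv ?_
    field_simp
    ring
  have hmono : MonotoneOn g (Set.Ici 1) :=
    monotoneOn_of_hasDerivWithinAt_nonneg (convex_Ici 1)
      (fun t ht ↦ (hg t ht).continuousAt.continuousWithinAt)
      (fun t ht ↦ (hg t (interior_subset ht)).hasDerivWithinAt)
      (fun t _ ↦ sq_nonneg _)
  have := hmono Set.self_mem_Ici hv hv
  simp only [g, inv_one, log_one] at this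
  linarith

lemma log_one_add_le_div_sqrt {x : ℝ} (hx : 0 ≤ x) : log (1 + x) ≤ x / √(1 + x) := by
  have hx1 : 0 ≤ 1 + x := by linarith
  have := two_mul_log_le_sub_inv (v := √(1 + x)) (one_le_sqrt.2 (by linarith))
  rw [log_sqrt hx1] at this
  calc log (1 + x) = 2 * (log (1 + x) / 2) := by ring
    _ ≤ √(1 + x) - (√(1 + x))⁻¹ := this
    _ = x / √(1 + x) := by
      field_simp
      rw [sq_sqrt hx1]
      ring

end Real

lemma log_one_add_mul_div_le_of_mul_le_one {a c ρ : ℝ} (ha : 0 < a) (hc : 0 ≤ c)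
    (hρ : 0 ≤ ρ) (hca : 3 * c ≤ a) (hcρ : c * ρ ≤ 1) :
    log (1 + a * ρ) / a ≤ ρ / (1 + c * ρ) := by
  have haρ : 0 ≤ a * ρ := by positivity
  have hcρ0 : 0 ≤ c * ρ := by positivity
  have hsq : (1 + c * ρ) ^ 2 ≤ 1 + a * ρ := by
    nlinarith [mul_le_mul_of_nonneg_right hca hρ]
  have hsqrt : 1 + c * ρ ≤ √(1 + a * ρ) := le_sqrt_of_sq_le hsq
  rw [div_le_iff₀ ha]
  calc log (1 + a * ρ) ≤ a * ρ / √(1 + a * ρ) := log_one_add_le_div_sqrt haρ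
    _ ≤ a * ρ / (1 + c * ρ) := div_le_div_of_nonneg_left haρ (by positivity) hsqrt
    _ = ρ / (1 + c * ρ) * a := by ring

lemma log_one_add_mul_div_le_of_one_le_mul {a c ρ : ℝ} (ha : 0 < a) (hc : 0 < c)
    (hcρ : 1 ≤ c * ρ) (hlog : log (1 + a * ρ) ≤ a / (2 * c)) :
    log (1 + a * ρ) / a ≤ ρ / (1 + c * ρ) := by
  calc log (1 + a * ρ) / a ≤ a / (2 * c) / a := by gcongr
    _ = 1 / (2 * c) := by field_simp
    _ ≤ ρ / (1 + c * ρ) := by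
      rw [div_le_div_iff₀ (by positivity) (by positivity)]
      linarith

/-- At `ρ = 0` the two sides differ, since `1/0 = 0` makes the right one `c⁻¹`. -/
lemma div_one_add_mul_le_inv_one_div_add {c ρ : ℝ} (hc : 0 ≤ c) (hρ : 0 ≤ ρ) :
    ρ / (1 + c * ρ) ≤ (1 / ρ + c)⁻¹ := by
  rcases hρ.eq_or_lt with rfl | hρ
  · simpa using inv_nonneg.2 hc
  · exact le_of_eq (by field_simp)

theorem stmt_19_general (β c Δ ρ : ℝ) (hβ : 1 ≤ β) (hc : 0 < c)
    (hΔ : 0 < Δ) (hρ : 0 ≤ ρ)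
    (hcase : (ρ ≤ 1/c ∧ Δ ≤ β/(3*c)) ∨
      (1/c < ρ ∧ ρ < (Δ/β) * (Real.exp (β/(2*c*Δ)) - 1))) :
    (Δ/β) * Real.log (1 + β*ρ/Δ) ≤ (1/ρ + c)⁻¹ := by
  have ha : 0 < β / Δ := by positivity
  have hlhs : (Δ/β) * log (1 + β*ρ/Δ) = log (1 + β / Δ * ρ) / (β / Δ) := by
    field_simp
  rw [hlhs]
  refine le_trans ?_ (div_one_add_mul_le_inv_one_div_add hc.le hρ)
  rcases hcase with ⟨hsmall, hΔc⟩ | ⟨hlarge, hexp⟩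
  · refine log_one_add_mul_div_le_of_mul_le_one ha hc.le hρ ?_ ?_
    · rwa [le_div_iff₀ (by positivity), mul_comm, ← le_div_iff₀ (by positivity)] at hΔc
    · rwa [le_div_iff₀ hc, mul_comm] at hsmall
  · refine log_one_add_mul_div_le_of_one_le_mul ha hc ?_ ?_
    · rw [div_lt_iff₀ hc, mul_comm] at hlarge
      exact hlarge.le
    · rw [log_le_iff_le_exp (by positivity)]
      have : ρ * (β / Δ) < exp (β / (2 * c * Δ)) - 1 :=
        calc ρ * (β / Δ) < (Δ / β) * (exp (β / (2 * c * Δ)) - 1) * (β / Δ) :=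
              mul_lt_mul_of_pos_right hexp ha
          _ = exp (β / (2 * c * Δ)) - 1 := by field_simp
      rw [show β / Δ / (2 * c) = β / (2 * c * Δ) by field_simp]
      linarith

/-- Sufficient condition for the optimal power-sharing parameter to equal one:
for `σ > 0`, `β ≥ 1`, `c > 0`, spread `Δ > 0` and SNR `ρ ≥ 0`, if either
`ρ ≤ 1/c` and `Δ ≤ β/(3c)`, or `1/c < ρ < (Δ/β)(e^{β/(2cΔ)} - 1)`, then
`(Δ/β)·log(1 + βρ/Δ) ≤ (1/ρ + c)⁻¹`. -/
theorem stmt_19 (σ β c Δ ρ : ℝ) (hσ : 0 < σ) (hβ : 1 ≤ β) (hc : 0 < c)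
    (hΔ : 0 < Δ) (hρ : 0 ≤ ρ)
    (hcase : (ρ ≤ 1/c ∧ Δ ≤ β/(3*c)) ∨
      (1/c < ρ ∧ ρ < (Δ/β) * (Real.exp (β/(2*c*Δ)) - 1))) :
    (Δ/β) * Real.log (1 + β*ρ/Δ) ≤ (1/ρ + c)⁻¹ :=
  stmt_19_general β c Δ ρ hβ hc hΔ hρ hcase
end
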